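/- arXiv:1812.09519 — 2 statements merged into one kernel-verified Lean document; each statement's English description precedes it below -/
import Mathlib

section
/- For every tree variable automaton A over binary trees, there exists an equivalent homogenized tree variable automaton A' (i.e., accepting exactly the same trees under the same valuations) in which every state is either a 0-state or a 1-state but not both, and A' has at most twice as many states as A. -/
/-- A tree variable automaton (TVA) over binary Λ-trees with variable set X. -/
structure TVA (L X Q : Type) where
  init : L → Set X → Q → Prop
  trans : L → Q → Q → Q → Prop
  final : Q → Prop

/-- A binary Λ-tree whose leaves are annotated by a set of variables (a valuation). -/
inductive ATree (L X : Type) where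
  | leaf (l : L) (v : Set X)
  | node (l : L) (t₁ t₂ : ATree L X)

/-- `A.Reach t q` : there is a run of `A` on `t` (under the valuation carried by `t`)
mapping the root to `q`. -/
inductive TVA.Reach {L X Q : Type} (A : TVA L X Q) : ATree L X → Q → Prop
  | leaf {l v q} : A.init l v q → TVA.Reach A (ATree.leaf l v) q
  | node {l t₁ t₂ q₁ q₂ q} : TVA.Reach A t₁ q₁ → TVA.Reach A t₂ q₂ →
      A.trans l q₁ q₂ q → TVA.Reach A (ATree.node l t₁ t₂) q

/-- The valuation carried by the tree is non-empty: some leaf has a non-empty annotation. -/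
def ATree.hasNonempty {L X : Type} : ATree L X → Prop
  | ATree.leaf _ v => v.Nonempty
  | ATree.node _ t₁ t₂ => t₁.hasNonempty ∨ t₂.hasNonempty

/-- `q` is a 0-state: reachable at the root of some tree under the empty valuation. -/
def TVA.ZeroState {L X Q : Type} (A : TVA L X Q) (q : Q) : Prop :=
  ∃ t : ATree L X, ¬ t.hasNonempty ∧ A.Reach t q

/-- `q` is a 1-state: reachable at the root of some tree under some non-empty valuation. -/
def TVA.OneState {L X Q : Type} (A : TVA L X Q) (q : Q) : Prop :=
  ∃ t : ATree L X, t.hasNonempty ∧ A.Reach t q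

/-- Homogenized: every state is a 0-state or a 1-state, and no state is both. -/
def TVA.Homogenized {L X Q : Type} (A : TVA L X Q) : Prop :=
  ∀ q : Q, (A.ZeroState q ∨ A.OneState q) ∧ ¬ (A.ZeroState q ∧ A.OneState q)

/-- `A` accepts the tree `t` (under the valuation carried by `t`). -/
def TVA.Accepts {L X Q : Type} (A : TVA L X Q) (t : ATree L X) : Prop :=
  ∃ q, A.Reach t q ∧ A.final q

/-!
Pair every state with a bit recording whether the valuation read so far is non-empty
(the bit of a leaf is its annotation's non-emptiness, the bit of a node the disjunction of
its children's bits). The bit of the root of a run is then determined by the tree, so no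
product state is both a 0-state and a 1-state; discarding the unreachable product states
makes every remaining state a 0-state or a 1-state, and leaves at most `2 |Q|` states.
-/

namespace TVA

variable {L X Q : Type} (A : TVA L X Q)

def trim : TVA L X {q : Q // ∃ t, A.Reach t q} where
  init l v s := A.init l v s.1
  trans l s₁ s₂ s := A.trans l s₁.1 s₂.1 s.1
  final s := A.final s.1

def flagged : TVA L X (Q × Bool) where
  init l v s := A.init l v s.1 ∧ (s.2 = true ↔ v.Nonempty)
  trans l s₁ s₂ s := A.trans l s₁.1 s₂.1 s.1 ∧ (s.2 = true ↔ s₁.2 = true ∨ s₂.2 = true)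
  final s := A.final s.1

variable {A}

theorem Reach.trim {t : ATree L X} {q : Q} (h : A.Reach t q) : A.trim.Reach t ⟨q, t, h⟩ := by
  induction h with
  | leaf h => exact .leaf h
  | node _ _ h ih₁ ih₂ => exact .node ih₁ ih₂ h

theorem reach_trim_iff {t : ATree L X} {s : {q : Q // ∃ t, A.Reach t q}} :
    A.trim.Reach t s ↔ A.Reach t s.1 := by
  refine ⟨fun h => ?_, Reach.trim⟩
  induction h with
  | leaf h => exact .leaf h
  | node _ _ h ih₁ ih₂ => exact .node ih₁ ih₂ h

theorem accepts_trim_iff {t : ATree L X} : A.trim.Accepts t ↔ A.Accepts t :=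
  ⟨fun ⟨s, hs, hf⟩ => ⟨s.1, reach_trim_iff.1 hs, hf⟩,
    fun ⟨q, hq, hf⟩ => ⟨⟨q, t, hq⟩, reach_trim_iff.2 hq, hf⟩⟩

theorem zeroState_trim_iff {s : {q : Q // ∃ t, A.Reach t q}} :
    A.trim.ZeroState s ↔ A.ZeroState s.1 := by
  simp only [ZeroState, reach_trim_iff]

theorem oneState_trim_iff {s : {q : Q // ∃ t, A.Reach t q}} :
    A.trim.OneState s ↔ A.OneState s.1 := by
  simp only [OneState, reach_trim_iff]

theorem zeroState_or_oneState_iff {q : Q} : A.ZeroState q ∨ A.OneState q ↔ ∃ t, A.Reach t q :=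
  ⟨fun h => h.elim (fun ⟨t, _, ht⟩ => ⟨t, ht⟩) (fun ⟨t, _, ht⟩ => ⟨t, ht⟩),
    fun ⟨t, ht⟩ => (em t.hasNonempty).elim (fun h => .inr ⟨t, h, ht⟩) (fun h => .inl ⟨t, h, ht⟩)⟩

theorem homogenized_trim (hA : ∀ q, ¬(A.ZeroState q ∧ A.OneState q)) : A.trim.Homogenized :=
  fun s => by
    rw [zeroState_trim_iff, oneState_trim_iff, zeroState_or_oneState_iff]
    exact ⟨s.2, hA s.1⟩

theorem Reach.flagged {t : ATree L X} {q : Q} (h : A.Reach t q) {b : Bool}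
    (hb : b = true ↔ t.hasNonempty) : A.flagged.Reach t (q, b) := by
  classical
  induction h generalizing b with
  | leaf h => exact .leaf ⟨h, hb⟩
  | @node _ t₁ t₂ _ _ _ _ _ h ih₁ ih₂ =>
    refine .node (ih₁ (b := decide t₁.hasNonempty) (by simp))
      (ih₂ (b := decide t₂.hasNonempty) (by simp)) ⟨h, ?_⟩
    simpa [ATree.hasNonempty] using hb

theorem reach_flagged_iff {t : ATree L X} {s : Q × Bool} :
    A.flagged.Reach t s ↔ A.Reach t s.1 ∧ (s.2 = true ↔ t.hasNonempty) := by
  refine ⟨fun h => ?_, fun ⟨h, hb⟩ => h.flagged hb⟩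
  induction h with
  | leaf h => exact ⟨.leaf h.1, h.2⟩
  | node _ _ h ih₁ ih₂ =>
    refine ⟨.node ih₁.1 ih₂.1 h.1, ?_⟩
    rw [h.2, ih₁.2, ih₂.2, ATree.hasNonempty]

theorem accepts_flagged_iff {t : ATree L X} : A.flagged.Accepts t ↔ A.Accepts t := by
  classical
  refine ⟨fun ⟨s, hs, hf⟩ => ⟨s.1, (reach_flagged_iff.1 hs).1, hf⟩, fun ⟨q, hq, hf⟩ => ?_⟩
  exact ⟨(q, decide t.hasNonempty), hq.flagged (by simp), hf⟩

theorem not_zeroState_and_oneState_flagged (s : Q × Bool) :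
    ¬(A.flagged.ZeroState s ∧ A.flagged.OneState s) := by
  rintro ⟨⟨t₀, h₀, hr₀⟩, ⟨t₁, h₁, hr₁⟩⟩
  exact h₀ ((reach_flagged_iff.1 hr₀).2.1 ((reach_flagged_iff.1 hr₁).2.2 h₁))

end TVA

/-- every TVA has an equivalent homogenized TVA with at most twice as
many states. -/
theorem stmt0 {L X Q : Type} [Fintype Q] (A : TVA L X Q) :
    ∃ (Q' : Type) (_ : Fintype Q') (A' : TVA L X Q'),
      A'.Homogenized ∧ (∀ t : ATree L X, A.Accepts t ↔ A'.Accepts t) ∧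
      Fintype.card Q' ≤ 2 * Fintype.card Q := by
  classical
  refine ⟨_, inferInstance, A.flagged.trim,
    TVA.homogenized_trim TVA.not_zeroState_and_oneState_flagged,
    fun t => (TVA.accepts_trim_iff.trans TVA.accepts_flagged_iff).symm, ?_⟩
  calc Fintype.card {s // ∃ t, A.flagged.Reach t s} ≤ Fintype.card (Q × Bool) :=
        Fintype.card_subtype_le _
    _ = 2 * Fintype.card Q := by rw [Fintype.card_prod, Fintype.card_bool, mul_comm]
end

section
/- In any homogenized tree variable automaton, for every tree T, every valuation ν of T, and every run ρ of the automaton on T under ν, a node n is mapped by ρ to a 1-state if and only if some leaf in the subtree rooted at n has a non-empty annotation under ν. -/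
/-- in a homogenized TVA, a run maps (the root of the subtree rooted at)
a node to a 1-state iff some leaf of that subtree has a non-empty annotation. -/
theorem stmt1 {L X Q : Type} (A : TVA L X Q) (hA : A.Homogenized)
    (t : ATree L X) (q : Q) (h : A.Reach t q) :
    A.OneState q ↔ t.hasNonempty := by
  constructor
  · intro h1
    by_contra hn
    exact (hA q).2 ⟨⟨t, hn, h⟩, h1⟩
  · intro hn
    exact ⟨t, hn, h⟩
end
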